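/- Let S ⊆ ℝ^15 be the span of the 23 reaction vectors of the Feinberg augmented Lee network N_F (as listed for its finest independent decomposition), let S_C be the span of the 21 reaction vectors excluding the pair {e_27 - e_24 - e_4, e_24 + e_4 - e_27} (reactions A_24 + A_4 ⇄ A_27), and let S_D be the span of that excluded pair. Then dim S = 12, dim S_C = 11, dim S_D = 1, and S = S_C ⊕ S_D; i.e., N_F = N_FC ∪ N_FD is an independent decomposition. -/
import Mathlib


/-- standard basis vector of `ℝ^15`, coordinates indexed by the species
`A_1, A_2, A_4, A_6, A_7, A_8, A_10, A_12, A_13, A_23, A_24, A_25, A_26, A_27, A_28`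
(in this order). -/
noncomputable def eF (i : Fin 15) : Fin 15 → ℝ := Pi.single i 1

/-- `S`: the stoichiometric subspace of the FAL network `N_F`, the span of its
23 reaction vectors. -/
noncomputable def Sfal : Submodule ℝ (Fin 15 → ℝ) :=
  Submodule.span ℝ
    ({eF 2, eF 5 - eF 0 - eF 2, eF 0 + eF 2 - eF 5, -eF 6, eF 1 - eF 0,
      eF 0 - eF 1, eF 8 - eF 7, eF 7 - eF 8, -eF 2, eF 9 - eF 10 - eF 12,
      eF 10 + eF 12 - eF 9, eF 11 - eF 5, eF 0 + eF 6 - eF 11, eF 12, -eF 12,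
      eF 4 - eF 2 - eF 3, eF 2 + eF 3 - eF 4, eF 13 - eF 10 - eF 2,
      eF 10 + eF 2 - eF 13, eF 14 - eF 8 - eF 1, eF 9 - eF 1, eF 1 - eF 9,
      eF 8 + eF 9 - eF 14} : Set (Fin 15 → ℝ))

/-- `S_C`: the stoichiometric subspace of `N_FC`, spanned by the 21 reaction
vectors excluding the pair for `A_24 + A_4 ⇄ A_27`. -/
noncomputable def SCfal : Submodule ℝ (Fin 15 → ℝ) :=
  Submodule.span ℝ
    ({eF 2, eF 5 - eF 0 - eF 2, eF 0 + eF 2 - eF 5, -eF 6, eF 1 - eF 0,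
      eF 0 - eF 1, eF 8 - eF 7, eF 7 - eF 8, -eF 2, eF 9 - eF 10 - eF 12,
      eF 10 + eF 12 - eF 9, eF 11 - eF 5, eF 0 + eF 6 - eF 11, eF 12, -eF 12,
      eF 4 - eF 2 - eF 3, eF 2 + eF 3 - eF 4, eF 14 - eF 8 - eF 1,
      eF 9 - eF 1, eF 1 - eF 9, eF 8 + eF 9 - eF 14} : Set (Fin 15 → ℝ))

/-- `S_D`: the stoichiometric subspace of `N_FD`, spanned by the reaction
vectors of `A_24 + A_4 ⇄ A_27`. -/
noncomputable def SDfal : Submodule ℝ (Fin 15 → ℝ) :=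
  Submodule.span ℝ
    ({eF 13 - eF 10 - eF 2, eF 10 + eF 2 - eF 13} : Set (Fin 15 → ℝ))

/- ### Auxiliary material -/

private theorem memeq {S : Submodule ℝ (Fin 15 → ℝ)} {a b : Fin 15 → ℝ}
    (h : a = b) (hb : b ∈ S) : a ∈ S := h ▸ hb

/-- a basis of `S`. -/
noncomputable def bS : Fin 12 → (Fin 15 → ℝ) :=
  ![eF 2, eF 6, eF 12, eF 1 - eF 0, eF 5 - eF 0, eF 11 - eF 0, eF 9 - eF 0,
    eF 10 - eF 0, eF 13 - eF 0, eF 8 - eF 7, eF 4 - eF 3, eF 14 - eF 8 - eF 0]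

/-- a basis of `S_C`. -/
noncomputable def bC : Fin 11 → (Fin 15 → ℝ) :=
  ![eF 2, eF 6, eF 12, eF 1 - eF 0, eF 5 - eF 0, eF 11 - eF 0, eF 9 - eF 0,
    eF 10 - eF 0, eF 8 - eF 7, eF 4 - eF 3, eF 14 - eF 8 - eF 0]

set_option maxHeartbeats 1000000 in
private theorem bS_li : LinearIndependent ℝ bS := by
  rw [Fintype.linearIndependent_iff]
  intro g h
  have hsum : ∀ (v : Fin 12 → Fin 15 → ℝ), ∑ i, g i • v i =
      g 0 • v 0 + g 1 • v 1 + g 2 • v 2 + g 3 • v 3 + g 4 • v 4 + g 5 • v 5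
      + g 6 • v 6 + g 7 • v 7 + g 8 • v 8 + g 9 • v 9 + g 10 • v 10 + g 11 • v 11 := by
    intro v; simp [Fin.sum_univ_succ]; abel
  rw [hsum] at h
  have h' : g 0 • eF 2 + g 1 • eF 6 + g 2 • eF 12 + g 3 • (eF 1 - eF 0) + g 4 • (eF 5 - eF 0)
      + g 5 • (eF 11 - eF 0) + g 6 • (eF 9 - eF 0) + g 7 • (eF 10 - eF 0) + g 8 • (eF 13 - eF 0)
      + g 9 • (eF 8 - eF 7) + g 10 • (eF 4 - eF 3) + g 11 • (eF 14 - eF 8 - eF 0) = 0 := h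
  have e := fun c : Fin 15 => congrFun h' c
  have e1 := e 1; have e2 := e 2; have e4 := e 4; have e5 := e 5
  have e6 := e 6; have e8 := e 8; have e9 := e 9; have e10 := e 10
  have e11 := e 11; have e12 := e 12; have e13 := e 13; have e14 := e 14
  simp [eF, Pi.single_apply] at e1 e2 e4 e5 e6 e8 e9 e10 e11 e12 e13 e14
  intro i
  fin_cases i <;> simp <;> linarith

set_option maxHeartbeats 1000000 in
private theorem bC_li : LinearIndependent ℝ bC := by
  rw [Fintype.linearIndependent_iff]
  intro g h
  have hsum : ∀ (v : Fin 11 → Fin 15 → ℝ), ∑ i, g i • v i =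
      g 0 • v 0 + g 1 • v 1 + g 2 • v 2 + g 3 • v 3 + g 4 • v 4 + g 5 • v 5
      + g 6 • v 6 + g 7 • v 7 + g 8 • v 8 + g 9 • v 9 + g 10 • v 10 := by
    intro v; simp [Fin.sum_univ_succ]; abel
  rw [hsum] at h
  have h' : g 0 • eF 2 + g 1 • eF 6 + g 2 • eF 12 + g 3 • (eF 1 - eF 0) + g 4 • (eF 5 - eF 0)
      + g 5 • (eF 11 - eF 0) + g 6 • (eF 9 - eF 0) + g 7 • (eF 10 - eF 0)
      + g 8 • (eF 8 - eF 7) + g 9 • (eF 4 - eF 3) + g 10 • (eF 14 - eF 8 - eF 0) = 0 := h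
  have e := fun c : Fin 15 => congrFun h' c
  have e1 := e 1; have e2 := e 2; have e4 := e 4; have e5 := e 5
  have e6 := e 6; have e8 := e 8; have e9 := e 9; have e10 := e 10
  have e11 := e 11; have e12 := e 12; have e14 := e 14
  simp [eF, Pi.single_apply] at e1 e2 e4 e5 e6 e8 e9 e10 e11 e12 e14
  intro i
  fin_cases i <;> simp <;> linarith

set_option maxHeartbeats 1000000 in
private theorem Sfal_eq_span_bS : Sfal = Submodule.span ℝ (Set.range bS) := by
  refine Submodule.span_eq_span ?_ ?_
  · -- every reaction vector lies in the span of the basis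
    have hb : ∀ i : Fin 12, bS i ∈ Submodule.span ℝ (Set.range bS) :=
      fun i => Submodule.subset_span ⟨i, rfl⟩
    have b0 : eF 2 ∈ Submodule.span ℝ (Set.range bS) := hb 0
    have b1 : eF 6 ∈ Submodule.span ℝ (Set.range bS) := hb 1
    have b2 : eF 12 ∈ Submodule.span ℝ (Set.range bS) := hb 2
    have b3 : eF 1 - eF 0 ∈ Submodule.span ℝ (Set.range bS) := hb 3
    have b4 : eF 5 - eF 0 ∈ Submodule.span ℝ (Set.range bS) := hb 4
    have b5 : eF 11 - eF 0 ∈ Submodule.span ℝ (Set.range bS) := hb 5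
    have b6 : eF 9 - eF 0 ∈ Submodule.span ℝ (Set.range bS) := hb 6
    have b7 : eF 10 - eF 0 ∈ Submodule.span ℝ (Set.range bS) := hb 7
    have b8 : eF 13 - eF 0 ∈ Submodule.span ℝ (Set.range bS) := hb 8
    have b9 : eF 8 - eF 7 ∈ Submodule.span ℝ (Set.range bS) := hb 9
    have b10 : eF 4 - eF 3 ∈ Submodule.span ℝ (Set.range bS) := hb 10
    have b11 : eF 14 - eF 8 - eF 0 ∈ Submodule.span ℝ (Set.range bS) := hb 11
    intro x hx
    simp only [Set.mem_insert_iff, Set.mem_singleton_iff] at hx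
    rcases hx with rfl|rfl|rfl|rfl|rfl|rfl|rfl|rfl|rfl|rfl|rfl|rfl|rfl|rfl|rfl|rfl|rfl|rfl|rfl|rfl|rfl|rfl|rfl
    · exact b0
    · exact sub_mem b4 b0
    · exact memeq (by abel) (sub_mem b0 b4)
    · exact neg_mem b1
    · exact b3
    · exact memeq (by abel) (neg_mem b3)
    · exact b9
    · exact memeq (by abel) (neg_mem b9)
    · exact neg_mem b0
    · exact memeq (by abel) (sub_mem (sub_mem b6 b7) b2)
    · exact memeq (by abel) (add_mem (sub_mem b7 b6) b2)
    · exact memeq (by abel) (sub_mem b5 b4)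
    · exact memeq (by abel) (sub_mem b1 b5)
    · exact b2
    · exact neg_mem b2
    · exact memeq (by abel) (sub_mem b10 b0)
    · exact memeq (by abel) (sub_mem b0 b10)
    · exact memeq (by abel) (sub_mem (sub_mem b8 b7) b0)
    · exact memeq (by abel) (add_mem (sub_mem b7 b8) b0)
    · exact memeq (by abel) (sub_mem b11 b3)
    · exact memeq (by abel) (sub_mem b6 b3)
    · exact memeq (by abel) (sub_mem b3 b6)
    · exact memeq (by abel) (sub_mem b6 b11)
  · -- every basis vector lies in S
    have hg : ∀ v, v ∈ ({eF 2, eF 5 - eF 0 - eF 2, eF 0 + eF 2 - eF 5, -eF 6, eF 1 - eF 0,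
        eF 0 - eF 1, eF 8 - eF 7, eF 7 - eF 8, -eF 2, eF 9 - eF 10 - eF 12,
        eF 10 + eF 12 - eF 9, eF 11 - eF 5, eF 0 + eF 6 - eF 11, eF 12, -eF 12,
        eF 4 - eF 2 - eF 3, eF 2 + eF 3 - eF 4, eF 13 - eF 10 - eF 2,
        eF 10 + eF 2 - eF 13, eF 14 - eF 8 - eF 1, eF 9 - eF 1, eF 1 - eF 9,
        eF 8 + eF 9 - eF 14} : Set (Fin 15 → ℝ)) → v ∈ Sfal :=
      fun v hv => Submodule.subset_span hv
    have ht0 : eF 2 ∈ Sfal := hg _ (by simp)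
    have ht1 : eF 6 ∈ Sfal := memeq (by abel) (neg_mem (hg (-eF 6) (by simp)))
    have ht2 : eF 12 ∈ Sfal := hg _ (by simp)
    have ht3 : eF 1 - eF 0 ∈ Sfal := hg _ (by simp)
    have ht4 : eF 5 - eF 0 ∈ Sfal :=
      memeq (by abel) (add_mem (hg (eF 5 - eF 0 - eF 2) (by simp)) ht0)
    have ht5 : eF 11 - eF 0 ∈ Sfal :=
      memeq (by abel) (add_mem (hg (eF 11 - eF 5) (by simp)) ht4)
    have ht6 : eF 9 - eF 0 ∈ Sfal :=
      memeq (by abel) (add_mem (hg (eF 9 - eF 1) (by simp)) ht3)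
    have ht7 : eF 10 - eF 0 ∈ Sfal :=
      memeq (by abel) (sub_mem (add_mem (hg (eF 10 + eF 12 - eF 9) (by simp)) ht6) ht2)
    have ht8 : eF 13 - eF 0 ∈ Sfal :=
      memeq (by abel) (add_mem (add_mem (hg (eF 13 - eF 10 - eF 2) (by simp)) ht7) ht0)
    have ht9 : eF 8 - eF 7 ∈ Sfal := hg _ (by simp)
    have ht10 : eF 4 - eF 3 ∈ Sfal :=
      memeq (by abel) (add_mem (hg (eF 4 - eF 2 - eF 3) (by simp)) ht0)
    have ht11 : eF 14 - eF 8 - eF 0 ∈ Sfal :=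
      memeq (by abel) (add_mem (hg (eF 14 - eF 8 - eF 1) (by simp)) ht3)
    rw [Set.range_subset_iff]
    intro i
    fin_cases i
    · exact ht0
    · exact ht1
    · exact ht2
    · exact ht3
    · exact ht4
    · exact ht5
    · exact ht6
    · exact ht7
    · exact ht8
    · exact ht9
    · exact ht10
    · exact ht11

set_option maxHeartbeats 1000000 in
private theorem SCfal_eq_span_bC : SCfal = Submodule.span ℝ (Set.range bC) := by
  refine Submodule.span_eq_span ?_ ?_
  · have hb : ∀ i : Fin 11, bC i ∈ Submodule.span ℝ (Set.range bC) :=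
      fun i => Submodule.subset_span ⟨i, rfl⟩
    have b0 : eF 2 ∈ Submodule.span ℝ (Set.range bC) := hb 0
    have b1 : eF 6 ∈ Submodule.span ℝ (Set.range bC) := hb 1
    have b2 : eF 12 ∈ Submodule.span ℝ (Set.range bC) := hb 2
    have b3 : eF 1 - eF 0 ∈ Submodule.span ℝ (Set.range bC) := hb 3
    have b4 : eF 5 - eF 0 ∈ Submodule.span ℝ (Set.range bC) := hb 4
    have b5 : eF 11 - eF 0 ∈ Submodule.span ℝ (Set.range bC) := hb 5
    have b6 : eF 9 - eF 0 ∈ Submodule.span ℝ (Set.range bC) := hb 6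
    have b7 : eF 10 - eF 0 ∈ Submodule.span ℝ (Set.range bC) := hb 7
    have b9 : eF 8 - eF 7 ∈ Submodule.span ℝ (Set.range bC) := hb 8
    have b10 : eF 4 - eF 3 ∈ Submodule.span ℝ (Set.range bC) := hb 9
    have b11 : eF 14 - eF 8 - eF 0 ∈ Submodule.span ℝ (Set.range bC) := hb 10
    intro x hx
    simp only [Set.mem_insert_iff, Set.mem_singleton_iff] at hx
    rcases hx with rfl|rfl|rfl|rfl|rfl|rfl|rfl|rfl|rfl|rfl|rfl|rfl|rfl|rfl|rfl|rfl|rfl|rfl|rfl|rfl|rfl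
    · exact b0
    · exact sub_mem b4 b0
    · exact memeq (by abel) (sub_mem b0 b4)
    · exact neg_mem b1
    · exact b3
    · exact memeq (by abel) (neg_mem b3)
    · exact b9
    · exact memeq (by abel) (neg_mem b9)
    · exact neg_mem b0
    · exact memeq (by abel) (sub_mem (sub_mem b6 b7) b2)
    · exact memeq (by abel) (add_mem (sub_mem b7 b6) b2)
    · exact memeq (by abel) (sub_mem b5 b4)
    · exact memeq (by abel) (sub_mem b1 b5)
    · exact b2
    · exact neg_mem b2
    · exact memeq (by abel) (sub_mem b10 b0)
    · exact memeq (by abel) (sub_mem b0 b10)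
    · exact memeq (by abel) (sub_mem b11 b3)
    · exact memeq (by abel) (sub_mem b6 b3)
    · exact memeq (by abel) (sub_mem b3 b6)
    · exact memeq (by abel) (sub_mem b6 b11)
  · have hg : ∀ v, v ∈ ({eF 2, eF 5 - eF 0 - eF 2, eF 0 + eF 2 - eF 5, -eF 6, eF 1 - eF 0,
        eF 0 - eF 1, eF 8 - eF 7, eF 7 - eF 8, -eF 2, eF 9 - eF 10 - eF 12,
        eF 10 + eF 12 - eF 9, eF 11 - eF 5, eF 0 + eF 6 - eF 11, eF 12, -eF 12,
        eF 4 - eF 2 - eF 3, eF 2 + eF 3 - eF 4, eF 14 - eF 8 - eF 1,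
        eF 9 - eF 1, eF 1 - eF 9, eF 8 + eF 9 - eF 14} : Set (Fin 15 → ℝ)) → v ∈ SCfal :=
      fun v hv => Submodule.subset_span hv
    have ht0 : eF 2 ∈ SCfal := hg _ (by simp)
    have ht1 : eF 6 ∈ SCfal := memeq (by abel) (neg_mem (hg (-eF 6) (by simp)))
    have ht2 : eF 12 ∈ SCfal := hg _ (by simp)
    have ht3 : eF 1 - eF 0 ∈ SCfal := hg _ (by simp)
    have ht4 : eF 5 - eF 0 ∈ SCfal :=
      memeq (by abel) (add_mem (hg (eF 5 - eF 0 - eF 2) (by simp)) ht0)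
    have ht5 : eF 11 - eF 0 ∈ SCfal :=
      memeq (by abel) (add_mem (hg (eF 11 - eF 5) (by simp)) ht4)
    have ht6 : eF 9 - eF 0 ∈ SCfal :=
      memeq (by abel) (add_mem (hg (eF 9 - eF 1) (by simp)) ht3)
    have ht7 : eF 10 - eF 0 ∈ SCfal :=
      memeq (by abel) (sub_mem (add_mem (hg (eF 10 + eF 12 - eF 9) (by simp)) ht6) ht2)
    have ht9 : eF 8 - eF 7 ∈ SCfal := hg _ (by simp)
    have ht10 : eF 4 - eF 3 ∈ SCfal :=
      memeq (by abel) (add_mem (hg (eF 4 - eF 2 - eF 3) (by simp)) ht0)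
    have ht11 : eF 14 - eF 8 - eF 0 ∈ SCfal :=
      memeq (by abel) (add_mem (hg (eF 14 - eF 8 - eF 1) (by simp)) ht3)
    rw [Set.range_subset_iff]
    intro i
    fin_cases i
    · exact ht0
    · exact ht1
    · exact ht2
    · exact ht3
    · exact ht4
    · exact ht5
    · exact ht6
    · exact ht7
    · exact ht9
    · exact ht10
    · exact ht11

private theorem SDfal_eq : SDfal = Submodule.span ℝ {eF 13 - eF 10 - eF 2} := by
  refine Submodule.span_eq_span ?_ ?_
  · intro x hx
    simp only [Set.mem_insert_iff, Set.mem_singleton_iff] at hx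
    rcases hx with rfl|rfl
    · exact Submodule.subset_span rfl
    · exact memeq (by abel)
        (neg_mem (Submodule.subset_span (Set.mem_singleton (eF 13 - eF 10 - eF 2))))
  · intro x hx
    rw [Set.mem_singleton_iff] at hx
    subst hx
    exact Submodule.subset_span (by simp)

private theorem vD_ne_zero : eF 13 - eF 10 - eF 2 ≠ (0 : Fin 15 → ℝ) := by
  intro h
  have := congrFun h 13
  simp [eF, Pi.single_apply] at this

set_option maxHeartbeats 1000000 in
private theorem vD_not_mem_SC : eF 13 - eF 10 - eF 2 ∉ SCfal := by
  intro hv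
  have hker : SCfal ≤ LinearMap.ker (LinearMap.proj (13 : Fin 15) :
      (Fin 15 → ℝ) →ₗ[ℝ] ℝ) := by
    rw [SCfal, Submodule.span_le]
    intro x hx
    simp only [Set.mem_insert_iff, Set.mem_singleton_iff] at hx
    rcases hx with rfl|rfl|rfl|rfl|rfl|rfl|rfl|rfl|rfl|rfl|rfl|rfl|rfl|rfl|rfl|rfl|rfl|rfl|rfl|rfl|rfl <;>
      simp [LinearMap.mem_ker, eF, Pi.single_apply]
  have h0 := hker hv
  simp [LinearMap.mem_ker, eF, Pi.single_apply] at h0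

set_option maxHeartbeats 1000000 in
/-- `dim S = 12`, `dim S_C = 11`, `dim S_D = 1`, and
`S = S_C ⊕ S_D`, i.e. `N_F = N_FC ∪ N_FD` is an independent decomposition of a
discordant network into two concordant subnetworks. -/
theorem FAL_independent_decomposition_concordant_discordant :
    Module.finrank ℝ Sfal = 12 ∧
    Module.finrank ℝ SCfal = 11 ∧
    Module.finrank ℝ SDfal = 1 ∧
    SCfal ⊔ SDfal = Sfal ∧
    Disjoint SCfal SDfal := by
  refine ⟨?_, ?_, ?_, ?_, ?_⟩
  · rw [Sfal_eq_span_bS, finrank_span_eq_card bS_li]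
    simp
  · rw [SCfal_eq_span_bC, finrank_span_eq_card bC_li]
    simp
  · rw [SDfal_eq]
    exact finrank_span_singleton vD_ne_zero
  · apply le_antisymm
    · have hCle : SCfal ≤ Sfal := by
        rw [SCfal_eq_span_bC, Sfal_eq_span_bS, Submodule.span_le, Set.range_subset_iff]
        intro i
        fin_cases i
        · exact Submodule.subset_span ⟨0, rfl⟩
        · exact Submodule.subset_span ⟨1, rfl⟩
        · exact Submodule.subset_span ⟨2, rfl⟩
        · exact Submodule.subset_span ⟨3, rfl⟩
        · exact Submodule.subset_span ⟨4, rfl⟩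
        · exact Submodule.subset_span ⟨5, rfl⟩
        · exact Submodule.subset_span ⟨6, rfl⟩
        · exact Submodule.subset_span ⟨7, rfl⟩
        · exact Submodule.subset_span ⟨9, rfl⟩
        · exact Submodule.subset_span ⟨10, rfl⟩
        · exact Submodule.subset_span ⟨11, rfl⟩
      have hDle : SDfal ≤ Sfal := by
        rw [SDfal_eq, Sfal_eq_span_bS, Submodule.span_le]
        intro x hx
        rw [Set.mem_singleton_iff] at hx
        subst hx
        have hb : ∀ i : Fin 12, bS i ∈ Submodule.span ℝ (Set.range bS) :=
          fun i => Submodule.subset_span ⟨i, rfl⟩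
        have h8 : eF 13 - eF 0 ∈ Submodule.span ℝ (Set.range bS) := hb 8
        have h7 : eF 10 - eF 0 ∈ Submodule.span ℝ (Set.range bS) := hb 7
        have h0 : eF 2 ∈ Submodule.span ℝ (Set.range bS) := hb 0
        exact memeq (by abel) (sub_mem (sub_mem h8 h7) h0)
      exact sup_le hCle hDle
    · rw [Sfal_eq_span_bS, Submodule.span_le, Set.range_subset_iff]
      have hC : ∀ j : Fin 11, bC j ∈ SCfal := by
        rw [SCfal_eq_span_bC]
        exact fun j => Submodule.subset_span ⟨j, rfl⟩
      have hv : eF 13 - eF 10 - eF 2 ∈ SDfal := by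
        rw [SDfal_eq]
        exact Submodule.subset_span rfl
      intro i
      fin_cases i
      · exact Submodule.mem_sup_left (hC 0)
      · exact Submodule.mem_sup_left (hC 1)
      · exact Submodule.mem_sup_left (hC 2)
      · exact Submodule.mem_sup_left (hC 3)
      · exact Submodule.mem_sup_left (hC 4)
      · exact Submodule.mem_sup_left (hC 5)
      · exact Submodule.mem_sup_left (hC 6)
      · exact Submodule.mem_sup_left (hC 7)
      · show eF 13 - eF 0 ∈ SCfal ⊔ SDfal
        have c7 : eF 10 - eF 0 ∈ SCfal := hC 7
        have c0 : eF 2 ∈ SCfal := hC 0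
        exact memeq (by abel)
          (add_mem (Submodule.mem_sup_right hv)
            (Submodule.mem_sup_left (add_mem c7 c0)))
      · exact Submodule.mem_sup_left (hC 8)
      · exact Submodule.mem_sup_left (hC 9)
      · exact Submodule.mem_sup_left (hC 10)
  · rw [SDfal_eq]
    exact (Submodule.disjoint_span_singleton' vD_ne_zero).2 vD_not_mem_SC
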